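/- Let A, A₀ ∈ ℂ^{2n×2n}, C ∈ ℂ^{2m×2n}, B₁ ∈ ℂ^{2n×2m}, and let T₁ ∈ ℂ^{2n×2n} be invertible with A♭ = T₁ A₀♭ T₁⁻¹ and C♭ = −T₁ B₁, and suppose T₁♭T₁ is invertible. If the physical realisability condition A + A♭ + C♭C = 0 holds, then A₀♭ (T₁♭T₁)⁻¹ + (T₁♭T₁)⁻¹ A₀ + B₁ B₁♭ = 0. -/

import Mathlib

open Matrix

noncomputable section

/-- The canonical equivalence `Fin n ⊕ Fin n ≃ Fin (2*n)`. -/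
def dEquiv (n : ℕ) : Fin n ⊕ Fin n ≃ Fin (2*n) :=
  finSumFinEquiv.trans (finCongr (two_mul n).symm)

/-- The matrix `J_n = diag(1_n, -1_n)`. -/
def Jmat (n : ℕ) : Matrix (Fin (2*n)) (Fin (2*n)) ℂ :=
  Matrix.reindex (dEquiv n) (dEquiv n) (Matrix.fromBlocks 1 0 0 (-1))

/-- `Z♭ := J_b Zᴴ J_a` for `Z : ℂ^{2a × 2b}`. -/
def flat {a b : ℕ} (Z : Matrix (Fin (2*a)) (Fin (2*b)) ℂ) :
    Matrix (Fin (2*b)) (Fin (2*a)) ℂ :=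
  Jmat b * Zᴴ * Jmat a

/-- A matrix is doubled-up if it has the block form `[X₋, X₊; conj X₊, conj X₋]`. -/
def DoubledUp {a b : ℕ} (X : Matrix (Fin (2*a)) (Fin (2*b)) ℂ) : Prop :=
  ∃ Xm Xp : Matrix (Fin a) (Fin b) ℂ,
    X = Matrix.reindex (dEquiv a) (dEquiv b)
      (Matrix.fromBlocks Xm Xp (Xp.map (starRingEnd ℂ)) (Xm.map (starRingEnd ℂ)))

/-- `S` is ♭-unitary if `S♭S = SS♭ = 1`. -/
def FlatUnitary {m : ℕ} (S : Matrix (Fin (2*m)) (Fin (2*m)) ℂ) : Prop :=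
  flat S * S = 1 ∧ S * flat S = 1

/-- `S` is symplectic if it is ♭-unitary and doubled-up. -/
def Symplectic {m : ℕ} (S : Matrix (Fin (2*m)) (Fin (2*m)) ℂ) : Prop :=
  DoubledUp S ∧ FlatUnitary S

/-- The vacuum covariance matrix `V_vac = [1_m, 0; 0, 0]`. -/
def Vvac (m : ℕ) : Matrix (Fin (2*m)) (Fin (2*m)) ℂ :=
  Matrix.reindex (dEquiv m) (dEquiv m) (Matrix.fromBlocks 1 0 0 0)

/-- A quantum linear system: doubled-up matrices satisfying physical realisability. -/
def IsQLS {n m : ℕ} (A : Matrix (Fin (2*n)) (Fin (2*n)) ℂ)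
    (C : Matrix (Fin (2*m)) (Fin (2*n)) ℂ) : Prop :=
  DoubledUp A ∧ DoubledUp C ∧ A + flat A + flat C * C = 0

/-- The transfer function `Ξ(s) = 1 - C (s - A)⁻¹ C♭`. -/
def transferFn {n m : ℕ} (A : Matrix (Fin (2*n)) (Fin (2*n)) ℂ)
    (C : Matrix (Fin (2*m)) (Fin (2*n)) ℂ) (s : ℂ) :
    Matrix (Fin (2*m)) (Fin (2*m)) ℂ :=
  1 - C * (s • (1 : Matrix (Fin (2*n)) (Fin (2*n)) ℂ) - A)⁻¹ * flat C

/-- The power spectrum with vacuum input: `Ψ(s) = Ξ(s) V_vac Ξ(-s̄)ᴴ`. -/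
def powerSpectrum {n m : ℕ} (A : Matrix (Fin (2*n)) (Fin (2*n)) ℂ)
    (C : Matrix (Fin (2*m)) (Fin (2*n)) ℂ) (s : ℂ) :
    Matrix (Fin (2*m)) (Fin (2*m)) ℂ :=
  transferFn A C s * Vvac m * (transferFn A C (-(starRingEnd ℂ s)))ᴴ

/-- The set of points at which the power spectrum is defined. -/
def psDefined {n : ℕ} (A : Matrix (Fin (2*n)) (Fin (2*n)) ℂ) (s : ℂ) : Prop :=
  s ∉ spectrum ℂ A ∧ (-(starRingEnd ℂ s)) ∉ spectrum ℂ A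

/-- Hurwitz stability: all eigenvalues have strictly negative real part. -/
def Hurwitz {I : Type*} [Fintype I] [DecidableEq I] (A : Matrix I I ℂ) : Prop :=
  ∀ lam ∈ spectrum ℂ A, lam.re < 0

/-- The controllability matrix `[B, AB, …, A^{N-1}B]` (columns indexed by pairs). -/
def ctrbMat {I J : Type*} [Fintype I] [DecidableEq I] [Fintype J]
    (A : Matrix I I ℂ) (B : Matrix I J ℂ) :
    Matrix I (Fin (Fintype.card I) × J) ℂ :=
  Matrix.of fun i p => (A ^ (p.1 : ℕ) * B) i p.2

/-- `(A, B)` is controllable if the controllability matrix has full rank. -/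
def Controllable {I J : Type*} [Fintype I] [DecidableEq I] [Fintype J] [DecidableEq J]
    (A : Matrix I I ℂ) (B : Matrix I J ℂ) : Prop :=
  (ctrbMat A B).rank = Fintype.card I

/-- The observability matrix `[C; CA; …; CA^{N-1}]` (rows indexed by pairs). -/
def obsMat {I J : Type*} [Fintype I] [DecidableEq I] [Fintype J]
    (C : Matrix J I ℂ) (A : Matrix I I ℂ) :
    Matrix (Fin (Fintype.card I) × J) I ℂ :=
  Matrix.of fun p j => (C * A ^ (p.1 : ℕ)) p.2 j

/-- `(C, A)` is observable if the observability matrix has full rank. -/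
def Observable {I J : Type*} [Fintype I] [DecidableEq I] [Fintype J]
    (C : Matrix J I ℂ) (A : Matrix I I ℂ) : Prop :=
  (obsMat C A).rank = Fintype.card I

/-- Minimality of a QLS `(A, C)`, with input matrix `B = -C♭`. -/
def MinimalQLS {n m : ℕ} (A : Matrix (Fin (2*n)) (Fin (2*n)) ℂ)
    (C : Matrix (Fin (2*m)) (Fin (2*n)) ℂ) : Prop :=
  Controllable A (-(flat C)) ∧ Observable C A

/-- Global minimality for vacuum input: no strictly smaller QLS has the same
power spectrum wherever both are defined. -/
def GloballyMinimal {n m : ℕ} (A : Matrix (Fin (2*n)) (Fin (2*n)) ℂ)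
    (C : Matrix (Fin (2*m)) (Fin (2*n)) ℂ) : Prop :=
  ¬ ∃ n' : ℕ, n' < n ∧ ∃ (A' : Matrix (Fin (2*n')) (Fin (2*n')) ℂ)
      (C' : Matrix (Fin (2*m)) (Fin (2*n')) ℂ), IsQLS A' C' ∧
      ∀ s : ℂ, psDefined A s → psDefined A' s →
        powerSpectrum A C s = powerSpectrum A' C' s

/-- The `Ã` matrix of the cascade realisation of the power spectrum. -/
def cascadeA {n m : ℕ} (A : Matrix (Fin (2*n)) (Fin (2*n)) ℂ)
    (C : Matrix (Fin (2*m)) (Fin (2*n)) ℂ) :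
    Matrix (Fin (2*n) ⊕ Fin (2*n)) (Fin (2*n) ⊕ Fin (2*n)) ℂ :=
  Matrix.fromBlocks (-(flat A)) 0 (flat C * Vvac m * C) A

/-- The `B̃` matrix of the cascade realisation. -/
def cascadeB {n m : ℕ} (A : Matrix (Fin (2*n)) (Fin (2*n)) ℂ)
    (C : Matrix (Fin (2*m)) (Fin (2*n)) ℂ) :
    Matrix (Fin (2*n) ⊕ Fin (2*n)) (Fin (2*m)) ℂ :=
  Matrix.fromRows (-(flat C)) (-(flat C * Vvac m))

/-- The `C̃` matrix of the cascade realisation. -/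
def cascadeC {n m : ℕ} (A : Matrix (Fin (2*n)) (Fin (2*n)) ℂ)
    (C : Matrix (Fin (2*m)) (Fin (2*n)) ℂ) :
    Matrix (Fin (2*m)) (Fin (2*n) ⊕ Fin (2*n)) ℂ :=
  Matrix.fromCols (-(Vvac m * C)) C

/-- `K := [J_n, 0; 0, -J_n]`. -/
def Kmat (n : ℕ) : Matrix (Fin (2*n) ⊕ Fin (2*n)) (Fin (2*n) ⊕ Fin (2*n)) ℂ :=
  Matrix.fromBlocks (Jmat n) 0 0 (-(Jmat n))

/-- `Σ := [0, 1; 1, 0]` (on the doubled index). -/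
def SigmaBig (n : ℕ) : Matrix (Fin (2*n) ⊕ Fin (2*n)) (Fin (2*n) ⊕ Fin (2*n)) ℂ :=
  Matrix.fromBlocks 0 1 1 0



section Aux

lemma Jmat_mul_Jmat (n : ℕ) : Jmat n * Jmat n = 1 := by
  simp only [Jmat, Matrix.reindex_apply, Matrix.submatrix_mul_equiv,
    Matrix.fromBlocks_multiply]
  simp [Matrix.submatrix_one_equiv]

lemma Jmat_conjTranspose (n : ℕ) : (Jmat n)ᴴ = Jmat n := by
  simp only [Jmat, Matrix.reindex_apply]
  rw [Matrix.conjTranspose_submatrix, Matrix.fromBlocks_conjTranspose]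
  simp

lemma flat_mul {a b c : ℕ} (X : Matrix (Fin (2*a)) (Fin (2*b)) ℂ)
    (Y : Matrix (Fin (2*b)) (Fin (2*c)) ℂ) :
    flat (X * Y) = flat Y * flat X := by
  simp only [flat, Matrix.conjTranspose_mul]
  have h : Yᴴ * Xᴴ = Yᴴ * (Jmat b * Jmat b) * Xᴴ := by rw [Jmat_mul_Jmat, Matrix.mul_one]
  rw [h]; simp only [Matrix.mul_assoc]

lemma flat_flat {a b : ℕ} (X : Matrix (Fin (2*a)) (Fin (2*b)) ℂ) :
    flat (flat X) = X := by
  simp only [flat, Matrix.conjTranspose_mul, Matrix.conjTranspose_conjTranspose,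
    Jmat_conjTranspose, Matrix.mul_assoc]
  rw [Jmat_mul_Jmat, Matrix.mul_one, ← Matrix.mul_assoc, Jmat_mul_Jmat, Matrix.one_mul]

lemma flat_neg {a b : ℕ} (X : Matrix (Fin (2*a)) (Fin (2*b)) ℂ) :
    flat (-X) = -flat X := by
  simp [flat]

lemma isUnit_Jmat (n : ℕ) : IsUnit (Jmat n) :=
  ⟨⟨Jmat n, Jmat n, Jmat_mul_Jmat n, Jmat_mul_Jmat n⟩, rfl⟩

lemma isUnit_flat {a : ℕ} {T : Matrix (Fin (2*a)) (Fin (2*a)) ℂ} (hT : IsUnit T) :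
    IsUnit (flat T) := by
  exact ((isUnit_Jmat a).mul ((Matrix.isUnit_conjTranspose T).mpr hT)).mul (isUnit_Jmat a)

lemma flat_inv {a : ℕ} (T : Matrix (Fin (2*a)) (Fin (2*a)) ℂ) :
    flat (T⁻¹) = (flat T)⁻¹ := by
  simp only [flat, Matrix.conjTranspose_nonsing_inv]
  rw [Matrix.mul_inv_rev, Matrix.mul_inv_rev]
  rw [Matrix.inv_eq_left_inv (Jmat_mul_Jmat a), Matrix.mul_assoc]

end Aux

/-- transport of the physical realisability condition under
`A♭ = T₁A₀♭T₁⁻¹`, `C♭ = -T₁B₁`. -/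
theorem realisability_transport_T1 {n m : ℕ}
    (A A₀ : Matrix (Fin (2*n)) (Fin (2*n)) ℂ)
    (C : Matrix (Fin (2*m)) (Fin (2*n)) ℂ)
    (B₁ : Matrix (Fin (2*n)) (Fin (2*m)) ℂ)
    (T₁ : Matrix (Fin (2*n)) (Fin (2*n)) ℂ) (hT : IsUnit T₁)
    (hTT : IsUnit (flat T₁ * T₁))
    (hA : flat A = T₁ * flat A₀ * T₁⁻¹) (hC : flat C = -(T₁ * B₁))
    (hphys : A + flat A + flat C * C = 0) :
    flat A₀ * (flat T₁ * T₁)⁻¹ + (flat T₁ * T₁)⁻¹ * A₀ + B₁ * flat B₁ = 0 := by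
  have hdT : IsUnit T₁.det := (Matrix.isUnit_iff_isUnit_det T₁).mp hT
  have hTf : IsUnit (flat T₁) := isUnit_flat hT
  have hdTf : IsUnit (flat T₁).det := (Matrix.isUnit_iff_isUnit_det _).mp hTf
  have c1 : T₁⁻¹ * T₁ = 1 := Matrix.nonsing_inv_mul _ hdT
  have c2 : flat T₁ * (flat T₁)⁻¹ = 1 := Matrix.mul_nonsing_inv _ hdTf
  have hAeq : A = (flat T₁)⁻¹ * A₀ * flat T₁ := by
    have h := congrArg flat hA
    rw [flat_flat, flat_mul, flat_mul, flat_flat, flat_inv] at h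
    rw [h]; noncomm_ring
  have hCeq : C = -(flat B₁ * flat T₁) := by
    have h := congrArg flat hC
    rw [flat_flat, flat_neg, flat_mul] at h
    exact h
  have key : (flat T₁)⁻¹ * A₀ * flat T₁ + T₁ * flat A₀ * T₁⁻¹
      + T₁ * B₁ * (flat B₁ * flat T₁) = 0 := by
    have h := hphys
    rw [hA, hC, hAeq, hCeq] at h
    calc (flat T₁)⁻¹ * A₀ * flat T₁ + T₁ * flat A₀ * T₁⁻¹
        + T₁ * B₁ * (flat B₁ * flat T₁)
        = (flat T₁)⁻¹ * A₀ * flat T₁ + T₁ * flat A₀ * T₁⁻¹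
          + -(T₁ * B₁) * -(flat B₁ * flat T₁) := by rw [Matrix.neg_mul, Matrix.mul_neg, neg_neg]
      _ = 0 := h
  have key2 : T₁⁻¹ * ((flat T₁)⁻¹ * A₀ * flat T₁ + T₁ * flat A₀ * T₁⁻¹
      + T₁ * B₁ * (flat B₁ * flat T₁)) * (flat T₁)⁻¹ = 0 := by
    rw [key]; simp
  have t1 : T₁⁻¹ * ((flat T₁)⁻¹ * A₀ * flat T₁) * (flat T₁)⁻¹
      = T₁⁻¹ * (flat T₁)⁻¹ * A₀ := by
    simp only [Matrix.mul_assoc]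
    rw [c2, Matrix.mul_one]
  have t2 : T₁⁻¹ * (T₁ * flat A₀ * T₁⁻¹) * (flat T₁)⁻¹
      = flat A₀ * T₁⁻¹ * (flat T₁)⁻¹ := by
    simp only [← Matrix.mul_assoc]
    rw [c1, Matrix.one_mul]
  have t3 : T₁⁻¹ * (T₁ * B₁ * (flat B₁ * flat T₁)) * (flat T₁)⁻¹
      = B₁ * flat B₁ := by
    simp only [← Matrix.mul_assoc]
    rw [c1, Matrix.one_mul, Matrix.mul_assoc, c2, Matrix.mul_one]
  rw [Matrix.mul_inv_rev, ← key2, Matrix.mul_add, Matrix.mul_add,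
    Matrix.add_mul, Matrix.add_mul, t1, t2, t3]
  noncomm_ring


end
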